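/- For every nonnegative integer m, the polynomial p₂(x) = x² + ((3^(m+1) − 2^(m+1))/(3^(m+1) − 4^(m+1)))·x + (4^(m+1)·3^(−1−m) − 3^(m+1)·2^(−1−m))/(3^(m+1) − 4^(m+1)) is orthogonal to both 1 and x with respect to the inner product ⟨f,g⟩ = ∫₀¹ f(x)g(x)(−log x)^m dx. -/

import Mathlib

/-!
Substituting x = e^{-t} turns the k-th moment ∫₀¹ xᵏ (-log x)^m dx into the Gamma integral
∫₀^∞ t^m e^{-(k+1)t} dt = m!/(k+1)^{m+1}. Both orthogonality relations are therefore linear in the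
coefficients of p₂, with moments of order 0, …, 3, and reduce to two rational identities in
2^{m+1} and 3^{m+1}, since 4^{m+1} = (2^{m+1})².
-/

open MeasureTheory Set Real

lemma image_exp_neg_Ioi_zero : (fun t : ℝ => exp (-t)) '' Ioi 0 = Ioo 0 1 := by
  ext y
  simp only [mem_image, mem_Ioi, mem_Ioo]
  constructor
  · rintro ⟨t, ht, rfl⟩
    exact ⟨exp_pos _, exp_lt_one_iff.mpr (by linarith)⟩
  · rintro ⟨hy0, hy1⟩
    exact ⟨-log y, by simpa using log_neg hy0 hy1, by rw [neg_neg, exp_log hy0]⟩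

lemma injOn_exp_neg (s : Set ℝ) : InjOn (fun t : ℝ => exp (-t)) s :=
  fun _ _ _ _ h => neg_injective (exp_injective h)

lemma integrableOn_Ioo_zero_one_iff {g : ℝ → ℝ} :
    IntegrableOn g (Ioo 0 1) ↔ IntegrableOn (fun t => exp (-t) * g (exp (-t))) (Ioi 0) := by
  rw [← image_exp_neg_Ioi_zero, integrableOn_image_iff_integrableOn_abs_deriv_smul
    measurableSet_Ioi (fun t _ => (hasDerivAt_neg t).exp.hasDerivWithinAt) (injOn_exp_neg _)]
  simp [abs_of_pos (exp_pos _)]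

lemma integral_Ioo_zero_one_eq_integral_Ioi (g : ℝ → ℝ) :
    ∫ x in Ioo 0 1, g x = ∫ t in Ioi 0, exp (-t) * g (exp (-t)) := by
  rw [← image_exp_neg_Ioi_zero, integral_image_eq_integral_abs_deriv_smul
    measurableSet_Ioi (fun t _ => (hasDerivAt_neg t).exp.hasDerivWithinAt) (injOn_exp_neg _)]
  simp [abs_of_pos (exp_pos _)]

lemma exp_neg_mul_pow_mul_neg_log_pow (m n : ℕ) (t : ℝ) :
    exp (-t) * (exp (-t) ^ n * (-log (exp (-t))) ^ m) = t ^ m * exp (-((n + 1) * t)) := by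
  rw [log_exp, neg_neg, ← exp_nat_mul, show -((n + 1) * t) = n * -t + -t by ring, exp_add]
  ring

lemma integrableOn_pow_mul_neg_log_pow (m n : ℕ) :
    IntegrableOn (fun x : ℝ => x ^ n * (-log x) ^ m) (Ioo 0 1) := by
  rw [integrableOn_Ioo_zero_one_iff]
  simp_rw [exp_neg_mul_pow_mul_neg_log_pow]
  have h := integrableOn_rpow_mul_exp_neg_mul_rpow (s := m) (p := 1) (b := n + 1)
    (by linarith [(Nat.cast_nonneg m : (0:ℝ) ≤ m)]) one_pos (by positivity)
  simpa only [rpow_one, rpow_natCast, neg_mul] using h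

lemma integral_pow_mul_neg_log_pow (m n : ℕ) :
    ∫ x in (0:ℝ)..1, x ^ n * (-log x) ^ m = m.factorial / (n + 1) ^ (m + 1) := by
  rw [intervalIntegral.integral_of_le zero_le_one, integral_Ioc_eq_integral_Ioo,
    integral_Ioo_zero_one_eq_integral_Ioi]
  simp_rw [exp_neg_mul_pow_mul_neg_log_pow]
  have h := integral_rpow_mul_exp_neg_mul_Ioi (a := m + 1) (r := n + 1) (by positivity)
    (by positivity)
  rw [add_sub_cancel_right, Gamma_nat_eq_factorial] at h
  simp only [rpow_natCast] at h
  rw [h, show (m : ℝ) + 1 = (m + 1 : ℕ) by push_cast; rfl, rpow_natCast, div_pow, one_pow]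
  ring

lemma integral_pow_mul_quadratic_mul_neg_log_pow (m j : ℕ) (a b : ℝ) :
    ∫ x in (0:ℝ)..1, x ^ j * (x ^ 2 + a * x + b) * (-log x) ^ m
      = m.factorial * (1 / (j + 3) ^ (m + 1) + a / (j + 2) ^ (m + 1) + b / (j + 1) ^ (m + 1)) := by
  have hint (k : ℕ) : IntervalIntegrable (fun x : ℝ => x ^ k * (-log x) ^ m) volume 0 1 :=
    (intervalIntegrable_iff_integrableOn_Ioo_of_le zero_le_one).2
      (integrableOn_pow_mul_neg_log_pow m k)
  have hsplit : (fun x : ℝ => x ^ j * (x ^ 2 + a * x + b) * (-log x) ^ m) = fun x =>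
      x ^ (j + 2) * (-log x) ^ m
        + (a * (x ^ (j + 1) * (-log x) ^ m) + b * (x ^ j * (-log x) ^ m)) := by
    funext x; ring
  rw [hsplit,
    intervalIntegral.integral_add (hint _) (((hint _).const_mul a).add ((hint _).const_mul b)),
    intervalIntegral.integral_add ((hint _).const_mul a) ((hint _).const_mul b),
    intervalIntegral.integral_const_mul, intervalIntegral.integral_const_mul,
    integral_pow_mul_neg_log_pow, integral_pow_mul_neg_log_pow, integral_pow_mul_neg_log_pow]
  push_cast
  ring

/-- The two orthogonality relations, divided by `m!`, with `u = 2^(m+1)` and `v = 3^(m+1)`. -/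
lemma gram_system_solution {u v : ℝ} (hu : u ≠ 0) (hv : v ≠ 0) (huv : v - u ^ 2 ≠ 0) :
    v⁻¹ + (v - u) / (v - u ^ 2) / u + (u ^ 2 * v⁻¹ - v * u⁻¹) / (v - u ^ 2) = 0 ∧
    (u ^ 2)⁻¹ + (v - u) / (v - u ^ 2) / v + (u ^ 2 * v⁻¹ - v * u⁻¹) / (v - u ^ 2) / u = 0 := by
  constructor <;> (field_simp; ring)

theorem p2_orthogonal_general (m : ℕ) :
    (∫ x in (0:ℝ)..1,
      (x ^ 2 + (((3:ℝ) ^ (m+1) - 2 ^ (m+1)) / ((3:ℝ) ^ (m+1) - 4 ^ (m+1))) * x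
        + ((4:ℝ) ^ (m+1) * (3:ℝ) ^ (-1 - (m:ℤ)) - (3:ℝ) ^ (m+1) * (2:ℝ) ^ (-1 - (m:ℤ)))
            / ((3:ℝ) ^ (m+1) - 4 ^ (m+1))) * (-Real.log x) ^ m = 0) ∧
    (∫ x in (0:ℝ)..1,
      x * (x ^ 2 + (((3:ℝ) ^ (m+1) - 2 ^ (m+1)) / ((3:ℝ) ^ (m+1) - 4 ^ (m+1))) * x
        + ((4:ℝ) ^ (m+1) * (3:ℝ) ^ (-1 - (m:ℤ)) - (3:ℝ) ^ (m+1) * (2:ℝ) ^ (-1 - (m:ℤ)))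
            / ((3:ℝ) ^ (m+1) - 4 ^ (m+1))) * (-Real.log x) ^ m = 0) := by
  have hzpow (c : ℝ) : c ^ (-1 - (m : ℤ)) = (c ^ (m + 1))⁻¹ := by
    rw [← zpow_natCast, ← zpow_neg]; congr 1; push_cast; ring
  have h42 : (4:ℝ) ^ (m + 1) = (2 ^ (m + 1)) ^ 2 := by
    rw [← pow_mul, mul_comm, pow_mul]; norm_num
  have h34 : (3:ℝ) ^ (m + 1) - (2 ^ (m + 1)) ^ 2 ≠ 0 :=
    h42 ▸ (sub_neg.2 (pow_lt_pow_left₀ (by norm_num) (by norm_num) m.succ_ne_zero)).ne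
  obtain ⟨h0, h1⟩ := gram_system_solution (by positivity) (by positivity) h34
  have i0 := integral_pow_mul_quadratic_mul_neg_log_pow m 0
  have i1 := integral_pow_mul_quadratic_mul_neg_log_pow m 1
  simp only [pow_zero, one_mul, pow_one] at i0 i1
  norm_num [i0, i1, hzpow, h42]
  exact ⟨.inr h0, .inr h1⟩
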